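/- arXiv:2512.19905 — 2 statements merged into one kernel-verified Lean document; each statement's English description precedes it below -/
import Mathlib

section
/- For every α > 0 and R̂ > 0, the equation R·(1 − α·m_Σ(R)) = R̂ with m_Σ(R) = (1/d)Σᵢ λᵢ/(λᵢ+R) (λᵢ ≥ 0 fixed) has at least one solution R > 0, and if α ≤ 1 the map R ↦ R(1 − α m_Σ(R)) is strictly increasing on (0,∞), so the solution is unique. -/
/-!
Write `f(R) = R (1 - α m_Σ(R)) = R - α · (1/d) ∑ᵢ R λᵢ/(λᵢ + R)`. Each term `R λᵢ/(λᵢ + R)` lies in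
`[0, λᵢ]`, so `R - α λ̄ ≤ f(R) ≤ R` with `λ̄` the mean eigenvalue, and the intermediate value
theorem on `[R̂, R̂ + α λ̄]` gives a solution. For monotonicity, `f` is the average of the maps
`R ↦ R (1 - α λ/(λ + R)) = R (R + (1 - α) λ)/(λ + R)`, each strictly increasing when `α ≤ 1`.
-/

open Finset Set

noncomputable section

/-- The normalized trace `m_Σ(R) = (1/d) tr Σ (Σ + R)⁻¹`, in terms of the eigenvalues of `Σ`. -/
def mSigma {d : ℕ} (lam : Fin d → ℝ) (R : ℝ) : ℝ :=
  (1 / (d : ℝ)) * ∑ i, lam i / (lam i + R)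

def ridgeMap {d : ℕ} (lam : Fin d → ℝ) (α R : ℝ) : ℝ :=
  R * (1 - α * mSigma lam R)

end

lemma mul_div_add_self_le {l R : ℝ} (hl : 0 ≤ l) (hR : 0 < R) : R * (l / (l + R)) ≤ l := by
  rw [mul_div_assoc', div_le_iff₀ (by positivity)]
  nlinarith

lemma strictMonoOn_mul_one_sub_mul_div {l α : ℝ} (hl : 0 ≤ l) (hα : α ≤ 1) :
    StrictMonoOn (fun R : ℝ => R * (1 - α * (l / (l + R)))) (Ioi 0) := by
  intro x (hx : 0 < x) y (hy : 0 < y) hxy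
  have hlx : 0 < l + x := by positivity
  have hly : 0 < l + y := by positivity
  have hrat : ∀ R, 0 < l + R → R * (1 - α * (l / (l + R))) = R * (R + (1 - α) * l) / (l + R) := by
    intro R hR
    field_simp
    ring
  simp only [hrat x hlx, hrat y hly]
  rw [div_lt_div_iff₀ hlx hly]
  -- the difference of the two sides is `(y - x) (l (x + y) + x y + (1 - α) l²)`
  nlinarith [mul_pos (sub_pos.2 hxy) (mul_pos hx hy),
    mul_nonneg (sub_pos.2 hxy).le (mul_nonneg hl (add_pos hx hy).le),
    mul_nonneg (sub_pos.2 hxy).le (mul_nonneg (sub_nonneg.2 hα) (mul_nonneg hl hl))]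

section

variable {d : ℕ} {lam : Fin d → ℝ}

lemma mul_mSigma_nonneg (hlam : ∀ i, 0 ≤ lam i) {R : ℝ} (hR : 0 < R) :
    0 ≤ R * mSigma lam R := by
  rw [mSigma, mul_left_comm, mul_sum]
  exact mul_nonneg (by positivity) (sum_nonneg fun i _ ↦ by have := hlam i; positivity)

lemma mul_mSigma_le (hlam : ∀ i, 0 ≤ lam i) {R : ℝ} (hR : 0 < R) :
    R * mSigma lam R ≤ (1 / (d : ℝ)) * ∑ i, lam i := by
  rw [mSigma, mul_left_comm, mul_sum]
  gcongr with i
  exact mul_div_add_self_le (hlam i) hR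

lemma ridgeMap_le_self (hlam : ∀ i, 0 ≤ lam i) {α R : ℝ} (hα : 0 ≤ α) (hR : 0 < R) :
    ridgeMap lam α R ≤ R := by
  have := mul_nonneg hα (mul_mSigma_nonneg hlam hR)
  rw [ridgeMap]
  linarith

lemma self_sub_le_ridgeMap (hlam : ∀ i, 0 ≤ lam i) {α R : ℝ} (hα : 0 ≤ α) (hR : 0 < R) :
    R - α * ((1 / (d : ℝ)) * ∑ i, lam i) ≤ ridgeMap lam α R := by
  have := mul_le_mul_of_nonneg_left (mul_mSigma_le hlam hR) hα
  rw [ridgeMap]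
  linarith

lemma continuousOn_ridgeMap (hlam : ∀ i, 0 ≤ lam i) (α : ℝ) :
    ContinuousOn (ridgeMap lam α) (Ioi 0) := by
  have hterm (i : Fin d) : ContinuousOn (fun R ↦ lam i / (lam i + R)) (Ioi 0) :=
    continuousOn_const.div (continuousOn_const.add continuousOn_id) fun R (hR : 0 < R) ↦ by
      linarith [hlam i]
  exact continuousOn_id.mul (continuousOn_const.sub (continuousOn_const.mul
    (continuousOn_const.mul (continuousOn_finsetSum _ fun i _ ↦ hterm i))))

lemma exists_ridgeMap_eq (hlam : ∀ i, 0 ≤ lam i) {α Rhat : ℝ} (hα : 0 ≤ α) (hRhat : 0 < Rhat) :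
    ∃ R, 0 < R ∧ ridgeMap lam α R = Rhat := by
  set b := Rhat + α * ((1 / (d : ℝ)) * ∑ i, lam i)
  have hb : Rhat ≤ b := le_add_of_nonneg_right <|
    mul_nonneg hα (mul_nonneg (by positivity) (sum_nonneg fun i _ ↦ hlam i))
  have hcont : ContinuousOn (ridgeMap lam α) (Icc Rhat b) :=
    (continuousOn_ridgeMap hlam α).mono fun R hR ↦ hRhat.trans_le hR.1
  have hlow := ridgeMap_le_self hlam hα hRhat
  have hhigh : Rhat ≤ ridgeMap lam α b := by
    simpa [b] using self_sub_le_ridgeMap hlam hα (hRhat.trans_le hb)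
  obtain ⟨R, hR, hfR⟩ := intermediate_value_Icc hb hcont ⟨hlow, hhigh⟩
  exact ⟨R, hRhat.trans_le hR.1, hfR⟩

lemma ridgeMap_eq_average (hd : d ≠ 0) (α R : ℝ) :
    ridgeMap lam α R = (1 / (d : ℝ)) * ∑ i, R * (1 - α * (lam i / (lam i + R))) := by
  simp only [ridgeMap, mSigma, mul_sub, mul_one, sum_sub_distrib, sum_const, card_univ,
    Fintype.card_fin, nsmul_eq_mul, ← mul_sum]
  field_simp

lemma strictMonoOn_ridgeMap (hlam : ∀ i, 0 ≤ lam i) {α : ℝ} (hα : α ≤ 1) :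
    StrictMonoOn (ridgeMap lam α) (Ioi 0) := by
  rcases eq_or_ne d 0 with rfl | hd
  · -- `1 / 0 = 0` in Lean, so for `d = 0` the map is the identity
    have : ridgeMap lam α = id := funext fun R ↦ by simp [ridgeMap, mSigma]
    exact this ▸ strictMono_id.strictMonoOn _
  intro x hx y hy hxy
  simp only [ridgeMap_eq_average hd]
  have hterm (i : Fin d) := strictMonoOn_mul_one_sub_mul_div (hlam i) hα hx hy hxy
  have hne : (univ : Finset (Fin d)).Nonempty := univ_nonempty_iff.2 ⟨⟨0, Nat.pos_of_ne_zero hd⟩⟩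
  exact mul_lt_mul_of_pos_left (sum_lt_sum_of_nonempty hne fun i _ ↦ hterm i) (by positivity)

end

/-- Existence of a positive solution of the renormalized-ridge fixed point
equation `R (1 − α m_Σ(R)) = R̂` with `m_Σ(R) = (1/d) ∑ᵢ λᵢ/(λᵢ+R)`, together
with strict monotonicity (hence uniqueness) when `α ≤ 1`. -/
theorem stmt_6 (d : ℕ) (lam : Fin d → ℝ) (hlam : ∀ i, 0 ≤ lam i)
    (α Rhat : ℝ) (hα : 0 < α) (hRhat : 0 < Rhat) :
    (∃ R : ℝ, 0 < R ∧
        R * (1 - α * ((1 / (d : ℝ)) * ∑ i, lam i / (lam i + R))) = Rhat)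
    ∧ (α ≤ 1 → StrictMonoOn
        (fun R : ℝ => R * (1 - α * ((1 / (d : ℝ)) * ∑ i, lam i / (lam i + R))))
        (Set.Ioi 0)) :=
  ⟨exists_ridgeMap_eq hlam hα.le hRhat, fun hα1 ↦ strictMonoOn_ridgeMap hlam hα1⟩
end

section
/- Let F be the CDF of V = −W where W is noncentral chi-squared with 1 degree of freedom and noncentrality λ ≥ 0, so that the right endpoint of F is v_F = 0. Then lim_{v → 0⁻} (−v)·F'(v)/(1 − F(v)) = 1/2; that is, F satisfies the von Mises condition for the Weibull maximum domain of attraction with index α = 1/2. -/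
/-!
With `s = √(-v)`, the event `{V ≤ v}` is the complement of `{|G + √λ| < s}`, so
`1 - F(v) = D(s)`, the standard Gaussian mass of the interval `(-√λ - s, -√λ + s)`. By the
fundamental theorem of calculus `D(0) = 0` and `D'(s) = A(s) := φ(-√λ + s) + φ(-√λ - s)`,
hence `F'(v) = A(s) / (2s)` and
`(-v) F'(v) / (1 - F(v)) = (s A(s) / D(s)) / 2 → (A(0) / A(0)) / 2 = 1/2`,
because `D(s) / s → D'(0) = A(0) = 2 φ(-√λ) > 0`.
-/

open MeasureTheory ProbabilityTheory Filter Topology Set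
open scoped NNReal

theorem intervalIntegral.hasDerivAt_integral_sub_add {f : ℝ → ℝ} (hf : Continuous f) (c s : ℝ) :
    HasDerivAt (fun s => ∫ x in (c - s)..(c + s), f x) (f (c + s) + f (c - s)) s := by
  have hprim (t : ℝ) : HasDerivAt (fun u => ∫ x in (0 : ℝ)..u, f x) (f t) t :=
    (hf.integral_hasStrictDerivAt 0 t).hasDerivAt
  have hsplit : (fun s => ∫ x in (c - s)..(c + s), f x) =
      fun s => (∫ x in (0 : ℝ)..(c + s), f x) - ∫ x in (0 : ℝ)..(c - s), f x := by
    ext s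
    rw [intervalIntegral.integral_interval_sub_left (hf.intervalIntegrable _ _)
      (hf.intervalIntegrable _ _)]
  rw [hsplit, ← sub_neg_eq_add]
  exact ((hprim _).comp_const_add c s).sub (by simpa using (hprim _).comp_const_sub c s)

namespace ProbabilityTheory

theorem continuous_gaussianPDFReal (μ : ℝ) (v : ℝ≥0) : Continuous (gaussianPDFReal μ v) := by
  unfold gaussianPDFReal; fun_prop

theorem gaussianReal_Ioo_toReal (μ : ℝ) {v : ℝ≥0} (hv : v ≠ 0) {a b : ℝ} (hab : a ≤ b) :
    (gaussianReal μ v (Ioo a b)).toReal = ∫ x in a..b, gaussianPDFReal μ v x := by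
  rw [gaussianReal_apply_eq_integral μ hv, ENNReal.toReal_ofReal
    (setIntegral_nonneg measurableSet_Ioo fun x _ => (gaussianPDFReal_pos μ v x hv).le),
    intervalIntegral.integral_of_le hab, integral_Ioc_eq_integral_Ioo]

end ProbabilityTheory

theorem preimage_neg_sq_add_Iic (m : ℝ) {v : ℝ} (hv : v ≤ 0) :
    (fun g : ℝ => -((g + m) ^ 2)) ⁻¹' Iic v = (Ioo (-m - √(-v)) (-m + √(-v)))ᶜ := by
  have hs : 0 ≤ √(-v) := Real.sqrt_nonneg _
  have hs2 : √(-v) ^ 2 = -v := Real.sq_sqrt (by linarith)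
  ext g
  simp only [mem_preimage, mem_Iic, mem_compl_iff, mem_Ioo, not_and_or, not_lt]
  constructor
  · intro h
    by_contra! hc
    nlinarith
  · rintro (h | h) <;> nlinarith

theorem map_neg_sq_add_Iic_toReal (μ : Measure ℝ) [IsProbabilityMeasure μ] (m : ℝ) {v : ℝ}
    (hv : v ≤ 0) :
    ((μ.map fun g : ℝ => -((g + m) ^ 2)) (Iic v)).toReal
      = 1 - (μ (Ioo (-m - √(-v)) (-m + √(-v)))).toReal := by
  rw [Measure.map_apply (by fun_prop) measurableSet_Iic, preimage_neg_sq_add_Iic m hv,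
    prob_compl_eq_one_sub measurableSet_Ioo,
    ENNReal.toReal_sub_of_le prob_le_one ENNReal.one_ne_top, ENNReal.toReal_one]

theorem tendsto_mul_div_of_hasDerivAt_zero {D A : ℝ → ℝ} (hD0 : D 0 = 0)
    (hD : HasDerivAt D (A 0) 0) (hA : ContinuousAt A 0) (hA0 : A 0 ≠ 0) :
    Tendsto (fun s => s * A s / D s) (𝓝[≠] 0) (𝓝 1) := by
  have h := (hA.tendsto.mono_left nhdsWithin_le_nhds).div hD.tendsto_slope_zero hA0
  rw [div_self hA0] at h
  refine h.congr fun s => ?_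
  simp only [Pi.div_apply, zero_add, hD0, sub_zero, smul_eq_mul]
  rw [div_eq_mul_inv, mul_inv, inv_inv]
  ring

theorem tendsto_sqrt_neg_nhdsLT_zero :
    Tendsto (fun v : ℝ => √(-v)) (𝓝[<] 0) (𝓝[≠] 0) := by
  refine tendsto_nhdsWithin_of_tendsto_nhds_of_eventually_within _ ?_ ?_
  · exact (continuous_neg.sqrt.tendsto' 0 0 (by simp)).mono_left nhdsWithin_le_nhds
  · filter_upwards [self_mem_nhdsWithin] with v (hv : v < 0)
    exact (Real.sqrt_pos.2 (neg_pos.2 hv)).ne'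

section ComposedWithSqrtNeg

variable {F D A : ℝ → ℝ}

theorem hasDerivAt_of_eq_one_sub_comp_sqrt_neg (hFD : ∀ v < 0, F v = 1 - D √(-v)) {v : ℝ}
    (hv : v < 0) (hD : HasDerivAt D (A √(-v)) √(-v)) :
    HasDerivAt F (A √(-v) / (2 * √(-v))) v := by
  have hsqrt := (Real.hasDerivAt_sqrt (neg_ne_zero.2 hv.ne)).comp v (hasDerivAt_neg v)
  have h := ((hD.comp v hsqrt).const_sub 1).congr_of_eventuallyEq
    (eventually_of_mem (Iio_mem_nhds hv) hFD)
  exact h.congr_deriv (by ring)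

theorem tendsto_neg_mul_div_one_sub_of_eq_one_sub_comp_sqrt_neg
    (hFD : ∀ v < 0, F v = 1 - D √(-v)) (hD0 : D 0 = 0) (hD : HasDerivAt D (A 0) 0)
    (hA : ContinuousAt A 0) (hA0 : A 0 ≠ 0) :
    Tendsto (fun v => -v * (A √(-v) / (2 * √(-v))) / (1 - F v)) (𝓝[<] 0) (𝓝 (1 / 2)) := by
  have h := ((tendsto_mul_div_of_hasDerivAt_zero hD0 hD hA hA0).comp
    tendsto_sqrt_neg_nhdsLT_zero).div_const 2
  refine h.congr' ?_
  filter_upwards [self_mem_nhdsWithin] with v (hv : v < 0)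
  have hs : √(-v) ≠ 0 := (Real.sqrt_pos.2 (neg_pos.2 hv)).ne'
  have hs2 : -v = √(-v) ^ 2 := (Real.sq_sqrt (neg_pos.2 hv).le).symm
  rw [Function.comp_apply, hFD v hv, sub_sub_cancel]
  generalize √(-v) = s at hs hs2 ⊢
  rw [hs2]
  field_simp

end ComposedWithSqrtNeg

theorem stmt_10_general (lam : ℝ)
    (F : ℝ → ℝ)
    (hF : ∀ v : ℝ, F v =
      (((gaussianReal 0 1).map
          (fun g : ℝ => -((g + Real.sqrt lam) ^ 2))) (Set.Iic v)).toReal) :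
    ∃ F' : ℝ → ℝ, (∀ v < 0, HasDerivAt F (F' v) v) ∧
      Tendsto (fun v : ℝ => (-v) * F' v / (1 - F v))
        (nhdsWithin 0 (Set.Iio 0)) (nhds (1 / 2)) := by
  set m := √lam
  set φ := gaussianPDFReal 0 1
  set D : ℝ → ℝ := fun s => ∫ x in (-m - s)..(-m + s), φ x
  set A : ℝ → ℝ := fun s => φ (-m + s) + φ (-m - s)
  have hφ : Continuous φ := continuous_gaussianPDFReal 0 1
  have hDA (s : ℝ) : HasDerivAt D (A s) s :=
    intervalIntegral.hasDerivAt_integral_sub_add hφ (-m) s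
  have hFD : ∀ v < 0, F v = 1 - D √(-v) := fun v hv => by
    rw [hF, map_neg_sq_add_Iic_toReal _ m hv.le,
      gaussianReal_Ioo_toReal 0 one_ne_zero (by linarith [Real.sqrt_nonneg (-v)])]
  have hA0 : A 0 ≠ 0 := by
    have := gaussianPDFReal_pos 0 1 (-m) one_ne_zero
    simp only [A, add_zero, sub_zero]
    positivity
  refine ⟨fun v => A √(-v) / (2 * √(-v)),
    fun v hv => hasDerivAt_of_eq_one_sub_comp_sqrt_neg hFD hv (hDA _), ?_⟩
  exact tendsto_neg_mul_div_one_sub_of_eq_one_sub_comp_sqrt_neg hFD (by simp [D]) (hDA 0)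
    (by fun_prop : Continuous A).continuousAt hA0

/-- Von Mises condition for the Weibull MDA with index `1/2`: let `F` be the
CDF of `V = −W`, where `W = (G + √λ)²` is noncentral chi-squared with one
degree of freedom (`G ~ N(0,1)`, noncentrality `λ ≥ 0`), with right endpoint
`v_F = 0`. Then `F` is differentiable on `(−∞, 0)` and
`lim_{v → 0⁻} (−v) F'(v) / (1 − F(v)) = 1/2`. -/
theorem stmt_10 (lam : ℝ) (hlam : 0 ≤ lam)
    (F : ℝ → ℝ)
    (hF : ∀ v : ℝ, F v =
      (((gaussianReal 0 1).map
          (fun g : ℝ => -((g + Real.sqrt lam) ^ 2))) (Set.Iic v)).toReal) :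
    ∃ F' : ℝ → ℝ, (∀ v < 0, HasDerivAt F (F' v) v) ∧
      Tendsto (fun v : ℝ => (-v) * F' v / (1 - F v))
        (nhdsWithin 0 (Set.Iio 0)) (nhds (1 / 2)) :=
  stmt_10_general lam F hF
end
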